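/- arXiv:2303.08507 — 6 statements merged into one kernel-verified Lean document; each statement's English description precedes it below -/
import Mathlib

section
/- Let G be a normal linear NBG with coefficients satisfying αᵢⱼ + αⱼᵢ > 2 whenever αᵢⱼ > 0 (i≠j). If x* is a δ-strong equilibrium for some δ > 0, then the support of x* is a stable set of the underlying directed graph: there is no arc between two charged vertices, i.e., x*ᵢ > 0 and x*ⱼ > 0 imply αᵢⱼ = 0. -/
/-- Cost of vertex `i` in a normal linear NBG with coefficients `α`. -/
def nbgCost {n : ℕ} (α : Fin n → Fin n → ℝ) (i : Fin n) (x : Fin n → ℝ) : ℝ :=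
  x i + ∑ j ∈ Finset.univ.erase i, α j i * x j

/-- The distribution obtained from `x` by moving mass `ε` from vertex `i` to vertex `j`. -/
def moveMass {n : ℕ} (x : Fin n → ℝ) (i j : Fin n) (ε : ℝ) : Fin n → ℝ :=
  fun k => x k - (if k = i then ε else 0) + (if k = j then ε else 0)

/-- Moving mass `ε` from `i` to `j ≠ i` changes the cost of `j` by `ε - αᵢⱼ ε`. -/
lemma cost_move {n : ℕ} (α : Fin n → Fin n → ℝ) (x : Fin n → ℝ) (i j : Fin n) (ε : ℝ)
    (hij : i ≠ j) :
    nbgCost α j (moveMass x i j ε) = nbgCost α j x + ε - α i j * ε := by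
  unfold nbgCost moveMass
  have hcong : ∀ k ∈ Finset.univ.erase j,
      α k j * (x k - (if k = i then ε else 0) + (if k = j then ε else 0))
      = α k j * x k - (if k = i then α i j * ε else 0) := by
    intro k hk
    have hkj : k ≠ j := Finset.ne_of_mem_erase hk
    by_cases h : k = i <;> simp [h, hkj, hij, mul_sub]
  rw [Finset.sum_congr rfl hcong, Finset.sum_sub_distrib,
    Finset.sum_ite_eq' (Finset.univ.erase j) i (fun _ => α i j * ε)]
  have hi : i ∈ Finset.univ.erase j := by simp [hij]
  simp [hi, if_neg hij.symm]
  ring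

/-- In a normal linear NBG with αᵢⱼ + αⱼᵢ > 2 on arcs, the support of any
δ-strong equilibrium (δ > 0) is a stable set of the underlying digraph. -/
theorem stmt_4 (n : ℕ) (r : ℝ) (hr : 0 < r) (α : Fin n → Fin n → ℝ)
    (hα : ∀ i j, 0 ≤ α i j)
    (hα2 : ∀ i j, i ≠ j → 0 < α i j → 2 < α i j + α j i)
    (x : Fin n → ℝ) (hx : ∀ i, 0 ≤ x i) (hsum : ∑ i, x i = r)
    (δ : ℝ) (hδ : 0 < δ)
    (hstrong : ∀ ε : ℝ, 0 ≤ ε → ε ≤ δ → ∀ i j : Fin n,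
      ε ≤ x i → nbgCost α i x ≤ nbgCost α j (moveMass x i j ε)) :
    ∀ i j : Fin n, i ≠ j → 0 < x i → 0 < x j → α i j = 0 := by
  intro i j hij hxi hxj
  by_contra hne
  have hαij : 0 < α i j := lt_of_le_of_ne (hα i j) (Ne.symm hne)
  have h2 : 2 < α i j + α j i := hα2 i j hij hαij
  set ε := min δ (min (x i) (x j)) with hε
  have hε0 : 0 < ε := lt_min hδ (lt_min hxi hxj)
  have hεδ : ε ≤ δ := min_le_left _ _
  have hεi : ε ≤ x i := le_trans (min_le_right _ _) (min_le_left _ _)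
  have hεj : ε ≤ x j := le_trans (min_le_right _ _) (min_le_right _ _)
  have h1 := hstrong ε hε0.le hεδ i j hεi
  have h2' := hstrong ε hε0.le hεδ j i hεj
  rw [cost_move α x i j ε hij] at h1
  rw [cost_move α x j i ε hij.symm] at h2'
  nlinarith [mul_pos hε0 (by linarith : (0:ℝ) < α i j + α j i - 2)]
end

section
/- For every mass distribution x of a symmetric graphical NBG, the utilitarian social cost satisfies r·𝒞ᵤ(x) = Σᵢ xᵢ fᵢ(xᵢ) + 2 Σ_{i<j} αᵢⱼ xᵢ xⱼ, and the potential Φ(x) = Σᵢ ∫₀^{xᵢ} fᵢ(t)dt + Σ_{i<j} αᵢⱼ xᵢxⱼ satisfies Φ(x) ≤ r·𝒞ᵤ(x); moreover if ∫₀^{x} fᵢ(t)dt ≥ γ·x·fᵢ(x) for all i and x with 0 < γ ≤ 1/2, then γ·r·𝒞ᵤ(x) ≤ Φ(x). -/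
/-- For a symmetric graphical NBG, r·𝒞ᵤ(x) = Σᵢ xᵢfᵢ(xᵢ) + 2Σ_{i<j}αᵢⱼxᵢxⱼ,
the potential Φ satisfies Φ(x) ≤ r·𝒞ᵤ(x), and if ∫₀^s fᵢ ≥ γ·s·fᵢ(s) with 0 < γ ≤ 1/2
then γ·r·𝒞ᵤ(x) ≤ Φ(x). -/
theorem stmt_9 (n : ℕ) (r : ℝ) (hr : 0 < r)
    (f : Fin n → ℝ → ℝ) (hfcont : ∀ i, Continuous (f i))
    (hfnn : ∀ i t, 0 ≤ f i t) (hfmono : ∀ i, Monotone (f i))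
    (α : Fin n → Fin n → ℝ) (hαnn : ∀ i j, 0 ≤ α i j)
    (hsym : ∀ i j, α i j = α j i)
    (γ : ℝ) (hγ0 : 0 < γ) (hγ : γ ≤ 1 / 2)
    (hγint : ∀ i, ∀ s : ℝ, 0 ≤ s → γ * s * f i s ≤ ∫ t in (0 : ℝ)..s, f i t)
    (x : Fin n → ℝ) (hx : ∀ i, 0 ≤ x i) (hsum : ∑ i, x i = r) :
    (∑ i, x i * (f i (x i) + ∑ j ∈ Finset.univ.erase i, α j i * x j)
        = ∑ i, x i * f i (x i)
          + 2 * ∑ i, ∑ j, if i < j then α i j * x i * x j else 0) ∧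
    ((∑ i, ∫ t in (0 : ℝ)..(x i), f i t)
        + (∑ i, ∑ j, if i < j then α i j * x i * x j else 0)
      ≤ ∑ i, x i * (f i (x i) + ∑ j ∈ Finset.univ.erase i, α j i * x j)) ∧
    (γ * ∑ i, x i * (f i (x i) + ∑ j ∈ Finset.univ.erase i, α j i * x j)
      ≤ (∑ i, ∫ t in (0 : ℝ)..(x i), f i t)
        + (∑ i, ∑ j, if i < j then α i j * x i * x j else 0)) := by
  set T := ∑ i, ∑ j, if i < j then α i j * x i * x j else 0 with hT
  have hTnn : 0 ≤ T := by
    refine Finset.sum_nonneg fun i _ => Finset.sum_nonneg fun j _ => ?_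
    split
    · exact mul_nonneg (mul_nonneg (hαnn i j) (hx i)) (hx j)
    · exact le_refl 0
  -- the cross term identity
  have key : ∀ i : Fin n, x i * ∑ j ∈ Finset.univ.erase i, α j i * x j
      = (∑ j, if i < j then α i j * x i * x j else 0)
        + (∑ j, if j < i then α i j * x i * x j else 0) := by
    intro i
    have hz : ((fun j => (if i < j then α i j * x i * x j else 0)
        + if j < i then α i j * x i * x j else 0) i) = 0 := by simp
    calc x i * ∑ j ∈ Finset.univ.erase i, α j i * x j
        = ∑ j ∈ Finset.univ.erase i, ((if i < j then α i j * x i * x j else 0)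
            + if j < i then α i j * x i * x j else 0) := by
          rw [Finset.mul_sum]
          refine Finset.sum_congr rfl fun j hj => ?_
          have hne : j ≠ i := Finset.ne_of_mem_erase hj
          rcases lt_trichotomy i j with h | h | h
          · rw [if_pos h, if_neg (asymm h), hsym i j]; ring
          · exact absurd h.symm hne
          · rw [if_neg (asymm h), if_pos h, hsym i j]; ring
      _ = ∑ j, ((if i < j then α i j * x i * x j else 0)
            + if j < i then α i j * x i * x j else 0) :=
          Finset.sum_erase Finset.univ hz
      _ = _ := Finset.sum_add_distrib
  have keysum : ∑ i, x i * ∑ j ∈ Finset.univ.erase i, α j i * x j = 2 * T := by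
    rw [Finset.sum_congr rfl fun i _ => key i, Finset.sum_add_distrib]
    have h2 : ∑ i, ∑ j, (if j < i then α i j * x i * x j else 0)
        = ∑ i, ∑ j, (if i < j then α i j * x i * x j else 0) := by
      rw [Finset.sum_comm]
      refine Finset.sum_congr rfl fun i _ => Finset.sum_congr rfl fun j _ => ?_
      rcases lt_or_ge i j with h | h
      · rw [if_pos h, if_pos h, hsym j i]; ring
      · rw [if_neg (not_lt.2 h), if_neg (not_lt.2 h)]
    rw [h2, ← hT]; ring
  have part1 : ∑ i, x i * (f i (x i) + ∑ j ∈ Finset.univ.erase i, α j i * x j)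
      = ∑ i, x i * f i (x i) + 2 * T := by
    have : ∀ i : Fin n, x i * (f i (x i) + ∑ j ∈ Finset.univ.erase i, α j i * x j)
        = x i * f i (x i) + x i * ∑ j ∈ Finset.univ.erase i, α j i * x j := fun i => by ring
    rw [Finset.sum_congr rfl fun i _ => this i, Finset.sum_add_distrib, keysum]
  have hint_le : ∀ i : Fin n, (∫ t in (0:ℝ)..(x i), f i t) ≤ x i * f i (x i) := by
    intro i
    have hmono : ∀ t ∈ Set.Icc (0:ℝ) (x i), f i t ≤ f i (x i) := fun t ht => hfmono i ht.2
    calc (∫ t in (0:ℝ)..(x i), f i t)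
        ≤ ∫ t in (0:ℝ)..(x i), f i (x i) := by
          refine intervalIntegral.integral_mono_on (hx i) ?_ ?_ hmono
          · exact (hfcont i).intervalIntegrable _ _
          · exact intervalIntegrable_const
      _ = x i * f i (x i) := by simp
  have hsum_int_le : (∑ i, ∫ t in (0:ℝ)..(x i), f i t) ≤ ∑ i, x i * f i (x i) :=
    Finset.sum_le_sum fun i _ => hint_le i
  have hsum_int_ge : γ * ∑ i, x i * f i (x i) ≤ ∑ i, ∫ t in (0:ℝ)..(x i), f i t := by
    rw [Finset.mul_sum]
    refine Finset.sum_le_sum fun i _ => ?_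
    have := hγint i (x i) (hx i)
    calc γ * (x i * f i (x i)) = γ * x i * f i (x i) := by ring
      _ ≤ _ := this
  refine ⟨part1, ?_, ?_⟩
  · rw [part1]; linarith
  · rw [part1]
    have : 2 * γ * T ≤ T := by nlinarith
    nlinarith
end

section
/- In the two-vertex symmetric graphical NBG with total mass 1, α₁₂ = α > 1, f₁(x₁)=x₁, f₂(x₂)=x₂ (so C₁(x)=(1−α)x₁+α and C₂(x)=(α−1)x₁+1 as functions of x₁), the equilibria are exactly x₁ ∈ {0, 1/2, 1}; the utilitarian social cost equals 1 at x₁=0 and x₁=1 and equals (1+α)/2 at x₁=1/2; consequently the price of anarchy equals (1+α)/2. -/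
/-- In the two-vertex symmetric graphical NBG with total mass 1, α > 1,
f₁(x₁)=x₁, f₂(x₂)=x₂, so C₁ = (1−α)x₁+α and C₂ = (α−1)x₁+1 as functions of x₁:
the equilibria are exactly x₁ ∈ {0, 1/2, 1}, the utilitarian social cost is 1 at the
extreme equilibria and (1+α)/2 at x₁ = 1/2, the worst equilibrium cost is (1+α)/2 and
the optimal social cost is 1; hence the price of anarchy is (1+α)/2. -/
theorem stmt_12 (α : ℝ) (hα : 1 < α) :
    (∀ x₁ : ℝ, 0 ≤ x₁ → x₁ ≤ 1 →
      (((0 < x₁ → (1 - α) * x₁ + α ≤ (α - 1) * x₁ + 1) ∧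
        (x₁ < 1 → (α - 1) * x₁ + 1 ≤ (1 - α) * x₁ + α)) ↔
        (x₁ = 0 ∨ x₁ = 1 / 2 ∨ x₁ = 1))) ∧
    (0 : ℝ) * ((1 - α) * 0 + α) + (1 - 0) * ((α - 1) * 0 + 1) = 1 ∧
    (1 : ℝ) * ((1 - α) * 1 + α) + (1 - 1) * ((α - 1) * 1 + 1) = 1 ∧
    (1 / 2 : ℝ) * ((1 - α) * (1 / 2) + α) + (1 - 1 / 2) * ((α - 1) * (1 / 2) + 1)
      = (1 + α) / 2 ∧
    IsGreatest {c : ℝ | ∃ x₁ : ℝ, 0 ≤ x₁ ∧ x₁ ≤ 1 ∧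
        (0 < x₁ → (1 - α) * x₁ + α ≤ (α - 1) * x₁ + 1) ∧
        (x₁ < 1 → (α - 1) * x₁ + 1 ≤ (1 - α) * x₁ + α) ∧
        c = x₁ * ((1 - α) * x₁ + α) + (1 - x₁) * ((α - 1) * x₁ + 1)}
      ((1 + α) / 2) ∧
    IsLeast {c : ℝ | ∃ x₁ : ℝ, 0 ≤ x₁ ∧ x₁ ≤ 1 ∧
        c = x₁ * ((1 - α) * x₁ + α) + (1 - x₁) * ((α - 1) * x₁ + 1)} 1 ∧
    ((1 + α) / 2) / 1 = (1 + α) / 2 := by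
  have hα' : 0 < α - 1 := by linarith
  refine ⟨?_, by ring, by ring, by ring, ?_, ?_, by ring⟩
  · intro x hx0 hx1
    constructor
    · rintro ⟨h1, h2⟩
      rcases eq_or_lt_of_le hx0 with h | h
      · exact Or.inl h.symm
      rcases eq_or_lt_of_le hx1 with h' | h'
      · exact Or.inr (Or.inr h')
      have a := h1 h
      have b := h2 h'
      refine Or.inr (Or.inl ?_)
      nlinarith
    · rintro (rfl | rfl | rfl) <;> constructor <;> intro h <;> nlinarith
  · constructor
    · exact ⟨1/2, by norm_num, by norm_num, by intro _; nlinarith, by intro _; nlinarith,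
        by ring⟩
    · rintro c ⟨x, hx0, hx1, h1, h2, rfl⟩
      rcases eq_or_lt_of_le hx0 with h | h
      · subst h; nlinarith
      rcases eq_or_lt_of_le hx1 with h' | h'
      · subst h'; nlinarith
      have a := h1 h
      have b := h2 h'
      nlinarith
  · constructor
    · exact ⟨0, le_refl 0, by norm_num, by ring⟩
    · rintro c ⟨x, hx0, hx1, rfl⟩
      nlinarith [mul_nonneg (mul_nonneg hx0 (sub_nonneg.2 hx1)) hα'.le]
end

section
/- In an α-uniform NBG with 0 < α < 1, no equilibrium has an uncharged vertex with exactly one charged neighbour (and all other neighbours uncharged). -/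
/-- In an α-uniform NBG with 0 < α < 1, no equilibrium has an uncharged
vertex with exactly one charged neighbour (all its other neighbours being uncharged). -/
theorem stmt_14 (n : ℕ) (r : ℝ) (hr : 0 < r) (α : ℝ) (hα0 : 0 < α) (hα1 : α < 1)
    (N : Fin n → Finset (Fin n)) (hNirr : ∀ i, i ∉ N i)
    (x : Fin n → ℝ) (hx : ∀ i, 0 ≤ x i) (hsum : ∑ i, x i = r)
    (heq : ∀ i j, 0 < x i →
      x i + α * ∑ k ∈ N i, x k ≤ x j + α * ∑ k ∈ N j, x k) :
    ¬ ∃ i j, x i = 0 ∧ j ∈ N i ∧ 0 < x j ∧ ∀ k ∈ N i, k ≠ j → x k = 0 := by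
  rintro ⟨i, j, hxi, hjNi, hxj, hothers⟩
  have hsumNi : ∑ k ∈ N i, x k = x j :=
    Finset.sum_eq_single_of_mem j hjNi (fun k hk hne => hothers k hk hne)
  have h := heq j i hxj
  have hNj : 0 ≤ ∑ k ∈ N j, x k := Finset.sum_nonneg fun k _ => hx k
  rw [hxi, hsumNi] at h
  nlinarith
end

section
/- For the path Pₙ with n odd, α = 1/2, and total mass 1, the distribution placing mass 2/(n+1) on each odd-indexed vertex and 0 on each even-indexed vertex is an equilibrium of the α-uniform NBG, in which every vertex has cost exactly 2/(n+1). -/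
/-!
On the odd vertices the profile puts mass `c` and both neighbours are empty, so their cost is `c`;
an even vertex `k` of a path with an odd number of vertices has both neighbours `k ± 1` odd and
inside the path, so its cost is `2αc`. For `α = 1/2` all costs are therefore equal to `c`, which is
the equilibrium condition, and `c = 2/(n+1)` makes the `(n+1)/2` odd vertices carry total mass `1`.
-/

namespace PathNBG

open Finset

/-- The profile on the path `1, …, n` with mass `c` on each odd vertex; it vanishes outside
`1, …, n`, which encodes the convention `x₀ = x_{n+1} = 0` (also for `0 - 1 = 0` in `ℕ`). -/
def oddProfile (c : ℝ) (n k : ℕ) : ℝ := if 1 ≤ k ∧ k ≤ n ∧ k % 2 = 1 then c else 0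

def cost (α : ℝ) (x : ℕ → ℝ) (k : ℕ) : ℝ := x k + α * (x (k - 1) + x (k + 1))

theorem cost_oddProfile_of_odd {α c : ℝ} {n k : ℕ} (hk : k ∈ Icc 1 n) (hodd : k % 2 = 1) :
    cost α (oddProfile c n) k = c := by
  rw [mem_Icc] at hk
  have hprev : ¬(1 ≤ k - 1 ∧ k - 1 ≤ n ∧ (k - 1) % 2 = 1) := by omega
  have hnext : ¬(1 ≤ k + 1 ∧ k + 1 ≤ n ∧ (k + 1) % 2 = 1) := by omega
  rw [cost, oddProfile, oddProfile, oddProfile, if_pos ⟨hk.1, hk.2, hodd⟩, if_neg hprev,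
    if_neg hnext]
  ring

theorem cost_oddProfile_of_even {α c : ℝ} {n k : ℕ} (hn : Odd n) (hk : k ∈ Icc 1 n)
    (heven : k % 2 = 0) : cost α (oddProfile c n) k = 2 * α * c := by
  rw [mem_Icc] at hk
  obtain ⟨m, rfl⟩ := hn
  have hself : ¬(1 ≤ k ∧ k ≤ 2 * m + 1 ∧ k % 2 = 1) := by omega
  have hprev : 1 ≤ k - 1 ∧ k - 1 ≤ 2 * m + 1 ∧ (k - 1) % 2 = 1 := by omega
  have hnext : 1 ≤ k + 1 ∧ k + 1 ≤ 2 * m + 1 ∧ (k + 1) % 2 = 1 := by omega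
  rw [cost, oddProfile, oddProfile, oddProfile, if_neg hself, if_pos hprev, if_pos hnext]
  ring

theorem cost_oddProfile_half {c : ℝ} {n k : ℕ} (hn : Odd n) (hk : k ∈ Icc 1 n) :
    cost (1 / 2) (oddProfile c n) k = c := by
  rcases Nat.mod_two_eq_zero_or_one k with heven | hodd
  · rw [cost_oddProfile_of_even hn hk heven]
    ring
  · exact cost_oddProfile_of_odd hk hodd

theorem sum_Icc_ite_mod_two_eq_one (c : ℝ) (m : ℕ) :
    ∑ k ∈ Icc 1 (2 * m + 1), (if k % 2 = 1 then c else 0) = (m + 1) * c := by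
  induction m with
  | zero => simp
  | succ m ih =>
    rw [show 2 * (m + 1) + 1 = 2 * m + 1 + 1 + 1 by ring, sum_Icc_succ_top (by omega),
      sum_Icc_succ_top (by omega), ih]
    have heven : (2 * m + 1 + 1) % 2 ≠ 1 := by omega
    have hodd : (2 * m + 1 + 1 + 1) % 2 = 1 := by omega
    rw [if_neg heven, if_pos hodd]
    push_cast
    ring

theorem sum_oddProfile {c : ℝ} {n : ℕ} (hn : Odd n) :
    ∑ k ∈ Icc 1 n, oddProfile c n k = (n + 1) / 2 * c := by
  obtain ⟨m, rfl⟩ := hn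
  have hrestrict : ∀ k ∈ Icc 1 (2 * m + 1),
      oddProfile c (2 * m + 1) k = if k % 2 = 1 then c else 0 := by
    intro k hk
    rw [mem_Icc] at hk
    simp [oddProfile, hk]
  rw [sum_congr rfl hrestrict, sum_Icc_ite_mod_two_eq_one]
  push_cast
  ring

end PathNBG

open PathNBG in
theorem stmt_17_general (n : ℕ) (hodd : Odd n) :
    (∑ k ∈ Finset.Icc 1 n,
        (if 1 ≤ k ∧ k ≤ n ∧ k % 2 = 1 then (2 : ℝ) / (n + 1) else 0) = 1) ∧
    (∀ k ∈ Finset.Icc 1 n,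
      (if 1 ≤ k ∧ k ≤ n ∧ k % 2 = 1 then (2 : ℝ) / (n + 1) else 0)
        + (1 / 2) * ((if 1 ≤ k - 1 ∧ k - 1 ≤ n ∧ (k - 1) % 2 = 1 then (2 : ℝ) / (n + 1) else 0)
          + (if 1 ≤ k + 1 ∧ k + 1 ≤ n ∧ (k + 1) % 2 = 1 then (2 : ℝ) / (n + 1) else 0))
        = 2 / (n + 1)) ∧
    (∀ k ∈ Finset.Icc 1 n, ∀ l ∈ Finset.Icc 1 n,
      (0 < (if 1 ≤ k ∧ k ≤ n ∧ k % 2 = 1 then (2 : ℝ) / (n + 1) else 0)) →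
      (if 1 ≤ k ∧ k ≤ n ∧ k % 2 = 1 then (2 : ℝ) / (n + 1) else 0)
        + (1 / 2) * ((if 1 ≤ k - 1 ∧ k - 1 ≤ n ∧ (k - 1) % 2 = 1 then (2 : ℝ) / (n + 1) else 0)
          + (if 1 ≤ k + 1 ∧ k + 1 ≤ n ∧ (k + 1) % 2 = 1 then (2 : ℝ) / (n + 1) else 0))
      ≤ (if 1 ≤ l ∧ l ≤ n ∧ l % 2 = 1 then (2 : ℝ) / (n + 1) else 0)
        + (1 / 2) * ((if 1 ≤ l - 1 ∧ l - 1 ≤ n ∧ (l - 1) % 2 = 1 then (2 : ℝ) / (n + 1) else 0)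
          + (if 1 ≤ l + 1 ∧ l + 1 ≤ n ∧ (l + 1) % 2 = 1 then (2 : ℝ) / (n + 1) else 0))) := by
  have hcost : ∀ k ∈ Finset.Icc 1 n, cost (1 / 2) (oddProfile (2 / (n + 1)) n) k = 2 / (n + 1) :=
    fun k hk => cost_oddProfile_half hodd hk
  refine ⟨?_, hcost, fun k hk l hl _ => (hcost k hk).trans (hcost l hl).symm |>.le⟩
  change ∑ k ∈ Finset.Icc 1 n, oddProfile (2 / (n + 1)) n k = 1
  rw [sum_oddProfile hodd]
  field_simp

/-- On the path Pₙ with n odd and α = 1/2, the distribution putting mass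
2/(n+1) on each odd-indexed vertex (vertices numbered 1,…,n, with convention
x₀ = x_{n+1} = 0) and 0 elsewhere has total mass 1, gives every vertex cost exactly
2/(n+1), and is an equilibrium of the (1/2)-uniform NBG. -/
theorem stmt_17 (n : ℕ) (hn : 1 ≤ n) (hodd : Odd n) :
    (∑ k ∈ Finset.Icc 1 n,
        (if 1 ≤ k ∧ k ≤ n ∧ k % 2 = 1 then (2 : ℝ) / (n + 1) else 0) = 1) ∧
    (∀ k ∈ Finset.Icc 1 n,
      (if 1 ≤ k ∧ k ≤ n ∧ k % 2 = 1 then (2 : ℝ) / (n + 1) else 0)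
        + (1 / 2) * ((if 1 ≤ k - 1 ∧ k - 1 ≤ n ∧ (k - 1) % 2 = 1 then (2 : ℝ) / (n + 1) else 0)
          + (if 1 ≤ k + 1 ∧ k + 1 ≤ n ∧ (k + 1) % 2 = 1 then (2 : ℝ) / (n + 1) else 0))
        = 2 / (n + 1)) ∧
    (∀ k ∈ Finset.Icc 1 n, ∀ l ∈ Finset.Icc 1 n,
      (0 < (if 1 ≤ k ∧ k ≤ n ∧ k % 2 = 1 then (2 : ℝ) / (n + 1) else 0)) →
      (if 1 ≤ k ∧ k ≤ n ∧ k % 2 = 1 then (2 : ℝ) / (n + 1) else 0)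
        + (1 / 2) * ((if 1 ≤ k - 1 ∧ k - 1 ≤ n ∧ (k - 1) % 2 = 1 then (2 : ℝ) / (n + 1) else 0)
          + (if 1 ≤ k + 1 ∧ k + 1 ≤ n ∧ (k + 1) % 2 = 1 then (2 : ℝ) / (n + 1) else 0))
      ≤ (if 1 ≤ l ∧ l ≤ n ∧ l % 2 = 1 then (2 : ℝ) / (n + 1) else 0)
        + (1 / 2) * ((if 1 ≤ l - 1 ∧ l - 1 ≤ n ∧ (l - 1) % 2 = 1 then (2 : ℝ) / (n + 1) else 0)
          + (if 1 ≤ l + 1 ∧ l + 1 ≤ n ∧ (l + 1) % 2 = 1 then (2 : ℝ) / (n + 1) else 0))) :=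
  stmt_17_general n hodd
end

section
/- For the star K_{n−1,1} (n ≥ 3, vertex n is the centre adjacent to leaves 1,…,n−1) with total mass 1: if α < 1/(n−1) or α > 1, the distribution with a = (1−α)/(n−2α(n−1)) on each leaf and b = (1−(n−1)α)/(n−2α(n−1)) on the centre has all entries positive, sums to 1, and all vertices have equal cost, hence it is an equilibrium of the α-uniform NBG. -/
/-- For the star K_{n−1,1} (n ≥ 3, centre adjacent to n−1 leaves) with total
mass 1: if α < 1/(n−1) or α > 1, then a = (1−α)/(n−2α(n−1)) on each leaf and
b = (1−(n−1)α)/(n−2α(n−1)) on the centre are positive, sum to 1, give all vertices equal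
cost, and hence form an equilibrium of the α-uniform NBG. -/
theorem stmt_19 (n : ℕ) (hn : 3 ≤ n) (α : ℝ) (hα : 0 ≤ α)
    (hcase : α < 1 / ((n : ℝ) - 1) ∨ 1 < α) :
    let a : ℝ := (1 - α) / ((n : ℝ) - 2 * α * ((n : ℝ) - 1))
    let b : ℝ := (1 - ((n : ℝ) - 1) * α) / ((n : ℝ) - 2 * α * ((n : ℝ) - 1))
    -- mass a on each of the n−1 leaves (indices < n−1), b on the centre (index n−1)
    let x : Fin n → ℝ := fun i => if (i : ℕ) = n - 1 then b else a
    -- cost: a leaf sees the centre, the centre sees all leaves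
    let c : Fin n → ℝ := fun i =>
      if (i : ℕ) = n - 1 then b + α * (((n : ℝ) - 1) * a) else a + α * b
    0 < a ∧ 0 < b ∧ ((n : ℝ) - 1) * a + b = 1 ∧
      (∀ i j : Fin n, c i = c j) ∧
      (∀ i j : Fin n, 0 < x i → c i ≤ c j) := by
  intro a b x c
  have hn3 : (3 : ℝ) ≤ (n : ℝ) := by exact_mod_cast hn
  have hn1 : (0 : ℝ) < (n : ℝ) - 1 := by linarith
  have ha : 0 < a ∧ 0 < b := by
    rcases hcase with h | h
    · have h1 : (n : ℝ) * α < 1 + α := by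
        have := (lt_div_iff₀ hn1).mp h
        nlinarith
      have hnum1 : 0 < 1 - α := by nlinarith
      have hnum2 : 0 < 1 - ((n:ℝ)-1) * α := by nlinarith
      have hden : 0 < (n : ℝ) - 2 * α * ((n : ℝ) - 1) := by nlinarith
      exact ⟨div_pos hnum1 hden, div_pos hnum2 hden⟩
    · have hnum1 : 1 - α < 0 := by linarith
      have hnum2 : 1 - ((n:ℝ)-1) * α < 0 := by nlinarith
      have hden : (n : ℝ) - 2 * α * ((n : ℝ) - 1) < 0 := by nlinarith
      exact ⟨div_pos_of_neg_of_neg hnum1 hden, div_pos_of_neg_of_neg hnum2 hden⟩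
  obtain ⟨ha, hb⟩ := ha
  have hden : (n : ℝ) - 2 * α * ((n : ℝ) - 1) ≠ 0 := by
    rcases hcase with h | h
    · have h1 : (n : ℝ) * α < 1 + α := by
        have := (lt_div_iff₀ hn1).mp h
        nlinarith
      nlinarith
    · nlinarith
  have haD : a * ((n : ℝ) - 2 * α * ((n : ℝ) - 1)) = 1 - α := div_mul_cancel₀ _ hden
  have hbD : b * ((n : ℝ) - 2 * α * ((n : ℝ) - 1)) = 1 - ((n : ℝ) - 1) * α :=
    div_mul_cancel₀ _ hden
  have hsum : ((n : ℝ) - 1) * a + b = 1 := by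
    apply mul_right_cancel₀ hden
    linear_combination ((n : ℝ) - 1) * haD + hbD
  have hkey : b + α * (((n : ℝ) - 1) * a) = a + α * b := by
    apply mul_right_cancel₀ hden
    linear_combination (1 - α) * hbD + (α * ((n : ℝ) - 1) - 1) * haD
  have hc : ∀ i j : Fin n, c i = c j := by
    intro i j
    show (if _ then _ else _) = (if _ then _ else _)
    split <;> split <;> simp [hkey]
  exact ⟨ha, hb, hsum, hc, fun i j _ => (hc i j).le⟩
end
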